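/- Let $v_1, v_2, v_3 \in \mathbb{Z}^3$ be a $\mathbb{Z}$-basis of $\mathbb{Z}^3$ and let $v_4 = v_1 + v_3 - v_2$. Let $\sigma = \mathbb{R}_{\geq 0}v_1 + \mathbb{R}_{\geq 0}v_2 + \mathbb{R}_{\geq 0}v_3 + \mathbb{R}_{\geq 0}v_4 \subseteq \mathbb{R}^3$, let $\tau = \mathbb{R}_{\geq 0}v_1 + \mathbb{R}_{\geq 0}v_3$ and let $W = \mathrm{span}_{\mathbb{R}}(v_2, v_4)$. Then $\tau \not\subseteq W$, but $W \cap \mathrm{relint}(\tau) \cap \mathbb{Z}^3 \neq \emptyset$; in fact $v_1 + v_3 = v_2 + v_4 \in W \cap \mathrm{relint}(\tau) \cap \mathbb{Z}^3$. -/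

import Mathlib

/-!
Over `ℝ` the images of a `ℤ`-basis of `ℤ³` stay linearly independent, because the change of
basis matrix from the standard basis is invertible over `ℤ`, hence over `ℝ`. Hence
`v₁ = x v₂ + y (v₁ + v₃ - v₂)` would force both `y = 1` (coefficient of `v₁`) and `y = 0`
(coefficient of `v₃`), so the ray `ℝ≥0 v₁ ⊆ τ` leaves `W`. The lattice point `v₁ + v₃ = v₂ + v₄`
lies in `W` and in the relative interior of `τ`.
-/

theorem Module.Basis.linearIndependent_intCast {n K : Type*} [Fintype n] [DecidableEq n]
    [Field K] (b : Module.Basis n ℤ (n → ℤ)) :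
    LinearIndependent K (fun k i ↦ (b k i : K)) := by
  have hunit : IsUnit (((Pi.basisFun ℤ n).toMatrix b).map (Int.cast : ℤ → K)) :=
    (@isUnit_of_invertible _ _ _ ((Pi.basisFun ℤ n).invertibleToMatrix b)).map
      (Int.castRingHom K).mapMatrix
  convert Matrix.linearIndependent_cols_iff_isUnit.mpr hunit using 1
  ext k i
  simp [Module.Basis.toMatrix_apply]

theorem LinearIndependent.notMem_span_pair_add_sub {R M : Type*} [CommRing R] [Nontrivial R]
    [AddCommGroup M] [Module R M] {v : Fin 3 → M} (hv : LinearIndependent R v) :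
    v 0 ∉ Submodule.span R {v 1, v 0 + v 2 - v 1} := by
  rw [Submodule.mem_span_pair]
  rintro ⟨a, c, hac⟩
  have hcoef := Fintype.linearIndependent_iff.mp hv ![c - 1, a - c, c] (by
    rw [Fin.sum_univ_three, ← sub_eq_zero.mpr hac]
    simp only [Matrix.cons_val]
    module)
  have h0 := hcoef 0
  have h2 := hcoef 2
  simp only [Matrix.cons_val, sub_eq_zero] at h0 h2
  exact one_ne_zero (h0.symm.trans h2)

/-- Lattice computation underlying the strictly log canonical toric flip example:
the wall `τ` is not contained in `W`, yet `W` meets the relative interior of `τ`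
in a lattice point, namely `v₁ + v₃ = v₂ + v₄`. -/
theorem stmt_13 (b : Module.Basis (Fin 3) ℤ (Fin 3 → ℤ))
    (v₁ v₂ v₃ v₄ : Fin 3 → ℤ)
    (h1 : v₁ = b 0) (h2 : v₂ = b 1) (h3 : v₃ = b 2)
    (h4 : v₄ = v₁ + v₃ - v₂)
    (ι : (Fin 3 → ℤ) → (Fin 3 → ℝ)) (hι : ∀ v i, ι v i = ((v i : ℤ) : ℝ)) :
    ¬ ({x | ∃ a c : ℝ, 0 ≤ a ∧ 0 ≤ c ∧ x = a • ι v₁ + c • ι v₃} ⊆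
        (Submodule.span ℝ {ι v₂, ι v₄} : Set (Fin 3 → ℝ))) ∧
    ι (v₁ + v₃) = ι (v₂ + v₄) ∧
    ι (v₁ + v₃) ∈ Submodule.span ℝ {ι v₂, ι v₄} ∧
    (∃ a c : ℝ, 0 < a ∧ 0 < c ∧ ι (v₁ + v₃) = a • ι v₁ + c • ι v₃) := by
  obtain rfl : ι = (Int.castAddHom ℝ).compLeft (Fin 3) := funext fun v ↦ funext (hι v)
  subst h1 h2 h3 h4
  have hsum : b 0 + b 2 = b 1 + (b 0 + b 2 - b 1) := by abel
  refine ⟨fun hsub ↦ ?_, congrArg _ hsum, ?_, 1, 1, one_pos, one_pos, by simp⟩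
  · have hli : LinearIndependent ℝ fun k ↦ (Int.castAddHom ℝ).compLeft (Fin 3) (b k) :=
      b.linearIndependent_intCast
    have hv₁ :=
      hsub (a := (Int.castAddHom ℝ).compLeft _ (b 0)) ⟨1, 0, zero_le_one, le_rfl, by simp⟩
    rw [map_sub, map_add] at hv₁
    exact hli.notMem_span_pair_add_sub hv₁
  · rw [hsum, map_add]
    exact Submodule.add_mem _ (Submodule.subset_span (by simp)) (Submodule.subset_span (by simp))
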